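/- arXiv:2306.08758 — 4 statements merged into one kernel-verified Lean document; each statement's English description precedes it below -/
import Mathlib

section
/- For every d ≥ 1 and r ∈ [1,∞) there is a constant C (depending only on r and d) such that the following holds: for all smooth ℤ^d-periodic functions f, g : ℝ^d → ℝ and every positive integer λ, one has (∫_{[0,1]^d} |f(x) g(λx)|^r dx)^{1/r} ≤ (∫_{[0,1]^d} |f|^r)^{1/r} (∫_{[0,1]^d} |g|^r)^{1/r} + C λ^{−1/r} ‖f‖_{C¹} (∫_{[0,1]^d}|g|^r)^{1/r}, where ‖f‖_{C¹} := sup_{x∈[0,1]^d} |f(x)| + sup_{x∈[0,1]^d} |∇f(x)|. -/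
open MeasureTheory

noncomputable section

/-- The unit cell `[0,1]^d` of the torus. -/
def unitCube (d : ℕ) : Set (EuclideanSpace ℝ (Fin d)) := {x | ∀ i, x i ∈ Set.Icc (0:ℝ) 1}

/-- `ℤ^d`-periodicity of a function on `ℝ^d`. -/
def ZdPeriodic {d : ℕ} {α : Type*} (f : EuclideanSpace ℝ (Fin d) → α) : Prop :=
  ∀ (x : EuclideanSpace ℝ (Fin d)) (m : Fin d → ℤ),
    f (x + (EuclideanSpace.equiv (Fin d) ℝ).symm fun i => (m i : ℝ)) = f x


/-!
Cut the cube into the `λ^d` half-open cells `∏ᵢ [kᵢ/λ, (kᵢ+1)/λ)`, of diameter `√d/λ`. On a cell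
`|f|` varies by at most `ε = √d ‖∇f‖_∞ / λ`, while by periodicity the mean of `|g(λ·)|^r` over every
cell is `∫|g|^r`. Comparing cell by cell, `∫|f g(λ·)|^r ≤ ∫(|f| + ε)^r · ∫|g|^r`, and Minkowski's
inequality gives `‖f g(λ·)‖_r ≤ (‖f‖_r + ε) ‖g‖_r`. Finally `ε ≤ √d λ^{-1/r} ‖f‖_{C¹}`.
-/

open Set ENNReal
open scoped NNReal

namespace ImprovedHolder

theorem lintegral_comp_smul {E : Type*} [NormedAddCommGroup E] [NormedSpace ℝ E]
    [MeasurableSpace E] [BorelSpace E] [FiniteDimensional ℝ E] (μ : Measure E)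
    [μ.IsAddHaarMeasure] {F : E → ℝ≥0∞} (hF : Measurable F) {c : ℝ} (hc : c ≠ 0) :
    ∫⁻ x, F (c • x) ∂μ = ENNReal.ofReal |(c ^ Module.finrank ℝ E)⁻¹| * ∫⁻ x, F x ∂μ := by
  rw [← lintegral_map hF (measurable_const_smul c), Measure.map_addHaar_smul μ hc,
    lintegral_smul_measure, smul_eq_mul]

theorem setLIntegral_mul_le_of_equidistributed {α ι : Type*} [MeasurableSpace α] [Countable ι]
    {μ : Measure α} {Q : ι → Set α} (hQ : ∀ k, MeasurableSet (Q k))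
    (hdisj : Pairwise (Function.onFun Disjoint Q)) {φ ψ ρ : α → ℝ≥0∞}
    (hψ : Measurable ψ)
    {I : ℝ≥0∞} (hψQ : ∀ k, ∫⁻ x in Q k, ψ x ∂μ = μ (Q k) * I)
    (hφρ : ∀ k, ∀ x ∈ Q k, ∀ y ∈ Q k, φ x ≤ ρ y) :
    ∫⁻ x in ⋃ k, Q k, φ x * ψ x ∂μ ≤ (∫⁻ x in ⋃ k, Q k, ρ x ∂μ) * I := by
  rw [lintegral_iUnion hQ hdisj, lintegral_iUnion hQ hdisj, ← ENNReal.tsum_mul_right]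
  refine ENNReal.tsum_le_tsum fun k => ?_
  -- on each cell, `φ` is replaced by its supremum there, which lies below every value of `ρ`
  set a := ⨆ x ∈ Q k, φ x
  calc ∫⁻ x in Q k, φ x * ψ x ∂μ ≤ ∫⁻ x in Q k, a * ψ x ∂μ :=
        setLIntegral_mono' (hQ k) fun x hx => by
          gcongr
          exact le_iSup₂ (f := fun x _ => φ x) x hx
    _ = (∫⁻ _ in Q k, a ∂μ) * I := by
        rw [lintegral_const_mul _ hψ, hψQ, setLIntegral_const, mul_assoc]
    _ ≤ (∫⁻ x in Q k, ρ x ∂μ) * I := by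
        gcongr ?_ * I
        exact setLIntegral_mono' (hQ k) fun y hy => iSup₂_le fun x hx => hφρ k x hx y hy

theorem lintegral_add_const_rpow_le {α : Type*} [MeasurableSpace α] {μ : Measure α}
    {φ : α → ℝ≥0∞} (hφ : AEMeasurable φ μ) (c : ℝ≥0∞) {r : ℝ} (hr : 1 ≤ r) :
    (∫⁻ x, (φ x + c) ^ r ∂μ) ^ (1 / r) ≤
      (∫⁻ x, φ x ^ r ∂μ) ^ (1 / r) + c * μ univ ^ (1 / r) := by
  have hr0 : 0 < r := zero_lt_one.trans_le hr
  have h := ENNReal.lintegral_Lp_add_le hφ (aemeasurable_const (b := c)) hr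
  rwa [lintegral_const, ENNReal.mul_rpow_of_nonneg _ _ (by positivity), ← ENNReal.rpow_mul,
    mul_one_div_cancel hr0.ne', ENNReal.rpow_one] at h

theorem toReal_le_add_mul_of_le {a b c ε : ℝ≥0∞} (hb : b ≠ ⊤) (hc : c ≠ ⊤) (hε : ε ≠ ⊤)
    (h : a ≤ (b + ε) * c) : a.toReal ≤ b.toReal * c.toReal + ε.toReal * c.toReal := by
  rw [← add_mul, ← ENNReal.toReal_add hb hε, ← ENNReal.toReal_mul]
  exact ENNReal.toReal_mono (ENNReal.mul_ne_top (ENNReal.add_ne_top.2 ⟨hb, hε⟩) hc) h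

theorem toReal_eLpNorm_ofReal {α : Type*} [MeasurableSpace α] {μ : Measure α} {r : ℝ}
    (hr : 0 < r) {φ : α → ℝ} (hφ : Measurable φ) :
    (eLpNorm φ (ENNReal.ofReal r) μ).toReal = (∫ x, |φ x| ^ r ∂μ) ^ (1 / r) := by
  rw [eLpNorm_eq_eLpNorm' (by simpa using hr) ofReal_ne_top, toReal_ofReal hr.le,
    eLpNorm'_eq_lintegral_enorm, ← ENNReal.toReal_rpow,
    integral_eq_lintegral_of_nonneg_ae (ae_of_all _ fun _ => by positivity)
      (hφ.abs.pow_const r).aestronglyMeasurable]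
  simp only [Real.enorm_eq_ofReal_abs, ENNReal.ofReal_rpow_of_nonneg (abs_nonneg _) hr.le]

theorem eLpNorm_restrict_lt_top_of_isCompact {α E : Type*} [TopologicalSpace α]
    [MeasurableSpace α] [OpensMeasurableSpace α] [NormedAddCommGroup E]
    [SecondCountableTopologyEither α E] {μ : Measure α} {s : Set α} (hs : MeasurableSet s)
    (hμs : μ s ≠ ⊤) (hsc : IsCompact s) {φ : α → E} (hφ : ContinuousOn φ s) (p : ℝ≥0∞) :
    eLpNorm φ p (μ.restrict s) < ⊤ := by
  have : IsFiniteMeasure (μ.restrict s) := isFiniteMeasure_restrict.2 hμs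
  obtain ⟨C, hC⟩ := hsc.exists_bound_of_continuousOn hφ
  exact (MemLp.of_bound (hφ.aestronglyMeasurable hs) C
      ((ae_restrict_iff' hs).2 (ae_of_all _ hC)))
    |>.eLpNorm_lt_top

theorem le_sSup_image_of_isCompact {E : Type*} [TopologicalSpace E] {s : Set E}
    (hs : IsCompact s) {φ : E → ℝ} (hφ : ContinuousOn φ s) {x : E} (hx : x ∈ s) :
    φ x ≤ sSup (φ '' s) :=
  le_csSup (hs.bddAbove_image hφ) (mem_image_of_mem φ hx)

theorem lipschitzOnWith_sSup_norm_fderiv {E F : Type*} [NormedAddCommGroup E] [NormedSpace ℝ E]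
    [NormedAddCommGroup F] [NormedSpace ℝ F] {f : E → F} (hf : ContDiff ℝ 1 f) {s : Set E}
    (hsc : IsCompact s) (hs : Convex ℝ s) :
    LipschitzOnWith (sSup ((fun x => ‖fderiv ℝ f x‖) '' s)).toNNReal f s :=
  hs.lipschitzOnWith_of_nnnorm_fderiv_le
    (fun _ _ => (hf.differentiable one_ne_zero).differentiableAt) fun x hx => by
      rw [← NNReal.coe_le_coe, coe_nnnorm, Real.coe_toNNReal']
      exact (le_sSup_image_of_isCompact hsc
        (hf.continuous_fderiv one_ne_zero).norm.continuousOn hx).trans (le_max_left _ _)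

theorem inv_natCast_le_rpow_neg_one_div {lam : ℕ} (hlam : 0 < lam) {r : ℝ} (hr : 1 ≤ r) :
    (lam : ℝ)⁻¹ ≤ (lam : ℝ) ^ (-(1 / r)) := by
  rw [← Real.rpow_neg_one]
  exact Real.rpow_le_rpow_of_exponent_le (by exact_mod_cast hlam)
    (neg_le_neg ((div_le_one (zero_lt_one.trans_le hr)).2 hr))

variable {d : ℕ}

theorem _root_.ZdPeriodic.comp {α β : Type*} {g : EuclideanSpace ℝ (Fin d) → α}
    (hg : ZdPeriodic g) (φ : α → β) : ZdPeriodic (φ ∘ g) :=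
  fun x m => congrArg φ (hg x m)

theorem dist_le_sqrt_mul_of_forall_dist_le {x y : EuclideanSpace ℝ (Fin d)} {c : ℝ} (hc : 0 ≤ c)
    (h : ∀ i, dist (x i) (y i) ≤ c) : dist x y ≤ √d * c :=
  calc dist x y = dist (WithLp.toLp 2 (WithLp.ofLp x)) (WithLp.toLp 2 (WithLp.ofLp y)) := rfl
    _ ≤ _ * dist (WithLp.ofLp x) (WithLp.ofLp y) :=
        (PiLp.lipschitzWith_toLp 2 _).dist_le_mul _ _
    _ ≤ √d * c := by
      gcongr
      · simp [Real.sqrt_eq_rpow]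
      · exact (dist_pi_le_iff hc).2 h

def box (s : Fin d → Set ℝ) : Set (EuclideanSpace ℝ (Fin d)) := {x | ∀ i, x i ∈ s i}

theorem box_eq_preimage (s : Fin d → Set ℝ) : box s = WithLp.ofLp ⁻¹' univ.pi s := by
  ext x; simp [box]

theorem measurableSet_box {s : Fin d → Set ℝ} (hs : ∀ i, MeasurableSet (s i)) :
    MeasurableSet (box s) := by
  rw [box_eq_preimage]
  exact (PiLp.volume_preserving_ofLp (Fin d)).measurable (.univ_pi hs)

theorem volume_box {s : Fin d → Set ℝ} (hs : ∀ i, MeasurableSet (s i)) :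
    volume (box s) = ∏ i, volume (s i) := by
  rw [box_eq_preimage, (PiLp.volume_preserving_ofLp (Fin d)).measure_preimage
    (MeasurableSet.univ_pi hs).nullMeasurableSet, volume_pi_pi]

theorem box_ae_eq {s t : Fin d → Set ℝ} (h : ∀ i, s i =ᵐ[volume] t i) :
    box s =ᵐ[volume] box t := by
  simp only [box_eq_preimage]
  exact (PiLp.volume_preserving_ofLp (Fin d)).quasiMeasurePreserving.preimage_ae_eq
    (by rw [volume_pi]; exact Measure.ae_eq_set_pi fun i _ => h i)

theorem isCompact_box {s : Fin d → Set ℝ} (hs : ∀ i, IsCompact (s i)) : IsCompact (box s) := by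
  rw [box_eq_preimage]
  exact (EuclideanSpace.equiv (Fin d) ℝ).toHomeomorph.isCompact_preimage.2
    (isCompact_univ_pi hs)

theorem convex_box {s : Fin d → Set ℝ} (hs : ∀ i, Convex ℝ (s i)) : Convex ℝ (box s) := by
  rw [box_eq_preimage]
  exact (convex_pi fun i _ => hs i).linear_preimage
    (EuclideanSpace.equiv (Fin d) ℝ).toLinearEquiv.toLinearMap

theorem zero_mem_unitCube : (0 : EuclideanSpace ℝ (Fin d)) ∈ unitCube d :=
  fun _ => ⟨le_rfl, zero_le_one⟩

theorem measurableSet_unitCube : MeasurableSet (unitCube d) :=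
  measurableSet_box fun _ => measurableSet_Icc

theorem isCompact_unitCube : IsCompact (unitCube d) :=
  isCompact_box fun _ => isCompact_Icc

theorem convex_unitCube : Convex ℝ (unitCube d) :=
  convex_box fun _ => convex_Icc 0 1

theorem volume_unitCube : volume (unitCube d) = 1 := by
  change volume (box fun _ => Icc (0 : ℝ) 1) = 1
  simp [volume_box fun _ => measurableSet_Icc]

def halfOpenCube (d : ℕ) : Set (EuclideanSpace ℝ (Fin d)) := box fun _ => Ico 0 1

theorem unitCube_ae_eq_halfOpenCube : unitCube d =ᵐ[volume] halfOpenCube d :=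
  box_ae_eq fun _ => Ico_ae_eq_Icc.symm

theorem measurableSet_halfOpenCube : MeasurableSet (halfOpenCube d) :=
  measurableSet_box fun _ => measurableSet_Ico

theorem volume_halfOpenCube : volume (halfOpenCube d) = 1 := by
  simp [halfOpenCube, volume_box fun _ => measurableSet_Ico]

theorem halfOpenCube_subset_unitCube : halfOpenCube d ⊆ unitCube d :=
  fun _ hx i => Ico_subset_Icc_self (hx i)

def cell (lam : ℕ) (k : Fin d → Fin lam) : Set (EuclideanSpace ℝ (Fin d)) :=
  box fun i => (fun a => lam * a) ⁻¹' Ico (k i : ℝ) (k i + 1)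

theorem measurableSet_cell (lam : ℕ) (k : Fin d → Fin lam) : MeasurableSet (cell lam k) :=
  measurableSet_box fun _ => measurableSet_Ico.preimage (measurable_const_mul _)

theorem iUnion_cell {lam : ℕ} (hlam : 0 < lam) : ⋃ k, cell lam k = halfOpenCube d := by
  have hl : (0 : ℝ) < lam := Nat.cast_pos.2 hlam
  ext x
  simp only [mem_iUnion, cell, halfOpenCube, box, mem_ofPred_eq, mem_preimage, mem_Ico]
  constructor
  · rintro ⟨k, hk⟩ i
    have hk1 : (k i : ℝ) + 1 ≤ lam := by exact_mod_cast (k i).isLt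
    constructor <;> nlinarith [hk i]
  · intro hx
    have hpos : ∀ i, 0 ≤ (lam : ℝ) * x i := fun i => mul_nonneg hl.le (hx i).1
    refine ⟨fun i => ⟨⌊(lam : ℝ) * x i⌋₊, ?_⟩,
      fun i => ⟨Nat.floor_le (hpos i), Nat.lt_floor_add_one _⟩⟩
    rw [Nat.floor_lt (hpos i)]
    nlinarith [(hx i).2]

theorem pairwise_disjoint_cell (lam : ℕ) :
    Pairwise (Function.onFun Disjoint (cell (d := d) lam)) := by
  intro k k' hne
  obtain ⟨i, hi⟩ := Function.ne_iff.1 hne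
  refine Set.disjoint_left.2 fun x hx hx' => hi (Fin.ext ?_)
  obtain ⟨h1, h2⟩ := hx i
  obtain ⟨h1', h2'⟩ := hx' i
  have : (k i : ℕ) < k' i + 1 := by exact_mod_cast h1.trans_lt h2'
  have : (k' i : ℕ) < k i + 1 := by exact_mod_cast h1'.trans_lt h2
  omega

theorem dist_le_of_mem_cell {lam : ℕ} (hlam : 0 < lam) {k : Fin d → Fin lam}
    {x y : EuclideanSpace ℝ (Fin d)} (hx : x ∈ cell lam k) (hy : y ∈ cell lam k) :
    dist x y ≤ √d / lam := by
  have hl : (0 : ℝ) < lam := Nat.cast_pos.2 hlam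
  rw [div_eq_mul_one_div]
  refine dist_le_sqrt_mul_of_forall_dist_le (by positivity) fun i => ?_
  obtain ⟨hx1, hx2⟩ := hx i
  obtain ⟨hy1, hy2⟩ := hy i
  rw [Real.dist_eq, abs_sub_le_iff, le_div_iff₀ hl, le_div_iff₀ hl]
  constructor <;> nlinarith

theorem setLIntegral_cell_comp_smul {H : EuclideanSpace ℝ (Fin d) → ℝ≥0∞} (hH : Measurable H)
    (hper : ZdPeriodic H) {lam : ℕ} (hlam : 0 < lam) (k : Fin d → Fin lam) :
    ∫⁻ x in cell lam k, H ((lam : ℝ) • x) =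
      ENNReal.ofReal ((lam : ℝ) ^ d)⁻¹ * ∫⁻ x in halfOpenCube d, H x := by
  have hl : (lam : ℝ) ≠ 0 := by positivity
  -- translating by the corner `k / λ` of the cell and rescaling by `λ` maps it onto
  -- `halfOpenCube d`, and the periodicity of `H` absorbs the integer shift `k`
  set v := (EuclideanSpace.equiv (Fin d) ℝ).symm fun i => (((k i : ℕ) : ℤ) : ℝ) with hv
  have hmem : ∀ y, y + (lam : ℝ)⁻¹ • v ∈ cell lam k ↔ (lam : ℝ) • y ∈ halfOpenCube d := by
    intro y
    simp only [cell, halfOpenCube, box, mem_ofPred_eq, mem_preimage, mem_Ico, PiLp.add_apply,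
      PiLp.smul_apply, smul_eq_mul, mul_add, mul_inv_cancel_left₀ hl, hv]
    simp [add_comm _ (1 : ℝ)]
  have hshift : ∀ y,
      (cell lam k).indicator (fun x => H ((lam : ℝ) • x)) (y + (lam : ℝ)⁻¹ • v) =
        (halfOpenCube d).indicator H ((lam : ℝ) • y) := by
    intro y
    classical
    rw [indicator_apply, indicator_apply, hmem, smul_add, smul_smul, mul_inv_cancel₀ hl,
      one_smul, hv, hper]
  calc ∫⁻ x in cell lam k, H ((lam : ℝ) • x)
      = ∫⁻ y, (cell lam k).indicator (fun x => H ((lam : ℝ) • x)) (y + (lam : ℝ)⁻¹ • v) := by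
        rw [lintegral_add_right_eq_self, lintegral_indicator (measurableSet_cell lam k)]
    _ = ∫⁻ y, (halfOpenCube d).indicator H ((lam : ℝ) • y) := by simp only [hshift]
    _ = ENNReal.ofReal ((lam : ℝ) ^ d)⁻¹ * ∫⁻ x in halfOpenCube d, H x := by
        rw [lintegral_comp_smul _ (hH.indicator measurableSet_halfOpenCube) hl,
          lintegral_indicator measurableSet_halfOpenCube, finrank_euclideanSpace_fin,
          abs_of_pos (by positivity)]

theorem volume_cell {lam : ℕ} (hlam : 0 < lam) (k : Fin d → Fin lam) :
    volume (cell lam k) = ENNReal.ofReal ((lam : ℝ) ^ d)⁻¹ := by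
  simpa [volume_halfOpenCube] using
    setLIntegral_cell_comp_smul (H := 1) measurable_const (fun _ _ => rfl) hlam k

theorem cell_subset_unitCube {lam : ℕ} (hlam : 0 < lam) (k : Fin d → Fin lam) :
    cell lam k ⊆ unitCube d :=
  (subset_iUnion _ k).trans ((iUnion_cell hlam).subset.trans halfOpenCube_subset_unitCube)

theorem enorm_le_enorm_add_of_mem_cell {f : EuclideanSpace ℝ (Fin d) → ℝ} {L : ℝ≥0}
    (hf : LipschitzOnWith L f (unitCube d)) {lam : ℕ} (hlam : 0 < lam) {k : Fin d → Fin lam}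
    {x y : EuclideanSpace ℝ (Fin d)} (hx : x ∈ cell lam k) (hy : y ∈ cell lam k) :
    ‖f x‖ₑ ≤ ‖f y‖ₑ + ENNReal.ofReal (L * √d / lam) := by
  have hdist : dist (f x) (f y) ≤ L * (√d / lam) :=
    (hf.dist_le_mul x (cell_subset_unitCube hlam k hx) y
      (cell_subset_unitCube hlam k hy)).trans
        (mul_le_mul_of_nonneg_left (dist_le_of_mem_cell hlam hx hy) L.2)
  rw [Real.enorm_eq_ofReal_abs, Real.enorm_eq_ofReal_abs,
    ← ENNReal.ofReal_add (abs_nonneg _) (by positivity)]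
  refine ENNReal.ofReal_le_ofReal ?_
  rw [Real.dist_eq] at hdist
  linarith [abs_sub_abs_le_abs_sub (f x) (f y), mul_div_assoc (L : ℝ) √d lam]

theorem lintegral_enorm_mul_comp_smul_rpow_le {f g : EuclideanSpace ℝ (Fin d) → ℝ} {L : ℝ≥0}
    (hf : LipschitzOnWith L f (unitCube d)) (hg : Measurable g) (hgp : ZdPeriodic g) {r : ℝ}
    (hr : 0 ≤ r) {lam : ℕ} (hlam : 0 < lam) :
    ∫⁻ x in unitCube d, ‖f x * g ((lam : ℝ) • x)‖ₑ ^ r ≤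
      (∫⁻ x in unitCube d, (‖f x‖ₑ + ENNReal.ofReal (L * √d / lam)) ^ r) *
        ∫⁻ x in unitCube d, ‖g x‖ₑ ^ r := by
  have hψ : Measurable fun x : EuclideanSpace ℝ (Fin d) => ‖g ((lam : ℝ) • x)‖ₑ ^ r :=
    (hg.comp (measurable_const_smul _)).enorm.pow_const r
  have key := setLIntegral_mul_le_of_equidistributed (μ := volume) (measurableSet_cell lam)
    (pairwise_disjoint_cell lam) hψ (I := ∫⁻ x in halfOpenCube d, ‖g x‖ₑ ^ r)
    (φ := fun x => ‖f x‖ₑ ^ r) (ρ := fun x => (‖f x‖ₑ + ENNReal.ofReal (L * √d / lam)) ^ r)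
    (fun k => by
      rw [volume_cell hlam, setLIntegral_cell_comp_smul (H := fun x => ‖g x‖ₑ ^ r)
        (hg.enorm.pow_const r) (hgp.comp fun a => ‖a‖ₑ ^ r) hlam k])
    (fun k x hx y hy =>
      ENNReal.rpow_le_rpow (enorm_le_enorm_add_of_mem_cell hf hlam hx hy) hr)
  simp only [setLIntegral_congr unitCube_ae_eq_halfOpenCube]
  simpa [iUnion_cell hlam, enorm_mul, ENNReal.mul_rpow_of_nonneg _ _ hr] using key

theorem eLpNorm_mul_comp_smul_le {f g : EuclideanSpace ℝ (Fin d) → ℝ} {L : ℝ≥0}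
    (hf : LipschitzOnWith L f (unitCube d)) (hg : Measurable g) (hgp : ZdPeriodic g)
    {r : ℝ} (hr : 1 ≤ r) {lam : ℕ} (hlam : 0 < lam) :
    eLpNorm (fun x => f x * g ((lam : ℝ) • x)) (.ofReal r) (volume.restrict (unitCube d)) ≤
      (eLpNorm f (.ofReal r) (volume.restrict (unitCube d)) + .ofReal (L * √d / lam)) *
        eLpNorm g (.ofReal r) (volume.restrict (unitCube d)) := by
  have hr0 : 0 < r := zero_lt_one.trans_le hr
  have hminkowski := lintegral_add_const_rpow_le (μ := volume.restrict (unitCube d))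
    (hf.continuousOn.enorm.aemeasurable measurableSet_unitCube) (.ofReal (L * √d / lam)) hr
  rw [Measure.restrict_apply_univ, volume_unitCube, ENNReal.one_rpow, mul_one] at hminkowski
  simp only [eLpNorm_eq_eLpNorm' (by simpa using hr0) ofReal_ne_top, toReal_ofReal hr0.le,
    eLpNorm'_eq_lintegral_enorm]
  calc _ ≤ ((∫⁻ x in unitCube d, (‖f x‖ₑ + .ofReal (L * √d / lam)) ^ r) *
          ∫⁻ x in unitCube d, ‖g x‖ₑ ^ r) ^ (1 / r) :=
        ENNReal.rpow_le_rpow (lintegral_enorm_mul_comp_smul_rpow_le hf hg hgp hr0.le hlam)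
          (by positivity)
    _ = _ := ENNReal.mul_rpow_of_nonneg _ _ (by positivity)
    _ ≤ _ := by gcongr

end ImprovedHolder

open ImprovedHolder

theorem improved_holder_inequality_general (d : ℕ) (r : ℝ) (hr : 1 ≤ r) :
    ∃ C : ℝ, ∀ f g : EuclideanSpace ℝ (Fin d) → ℝ,
      ContDiff ℝ (⊤ : ℕ∞) f → ContDiff ℝ (⊤ : ℕ∞) g → ZdPeriodic f → ZdPeriodic g →
      ∀ lam : ℕ, 0 < lam →
        (∫ x in unitCube d, |f x * g ((lam : ℝ) • x)| ^ r) ^ (1/r) ≤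
          (∫ x in unitCube d, |f x| ^ r) ^ (1/r) * (∫ x in unitCube d, |g x| ^ r) ^ (1/r)
          + C * (lam : ℝ) ^ (-(1/r))
            * (sSup ((fun x => |f x|) '' unitCube d)
                + sSup ((fun x => ‖fderiv ℝ f x‖) '' unitCube d))
            * (∫ x in unitCube d, |g x| ^ r) ^ (1/r) := by
  have hr0 : 0 < r := zero_lt_one.trans_le hr
  refine ⟨√d, fun f g hf hg _ hgp lam hlam => ?_⟩
  have hf1 : ContDiff ℝ 1 f := hf.of_le (by exact_mod_cast le_top)
  set M := sSup ((fun x => |f x|) '' unitCube d)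
  set L := sSup ((fun x => ‖fderiv ℝ f x‖) '' unitCube d)
  have hM : 0 ≤ M := (abs_nonneg _).trans <| le_sSup_image_of_isCompact isCompact_unitCube
    hf.continuous.abs.continuousOn zero_mem_unitCube
  have hL : 0 ≤ L := (norm_nonneg _).trans <| le_sSup_image_of_isCompact isCompact_unitCube
    (hf1.continuous_fderiv one_ne_zero).norm.continuousOn zero_mem_unitCube
  have hfin : ∀ φ : EuclideanSpace ℝ (Fin d) → ℝ, Continuous φ →
      eLpNorm φ (.ofReal r) (volume.restrict (unitCube d)) ≠ ⊤ := fun φ hφ =>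
    (eLpNorm_restrict_lt_top_of_isCompact measurableSet_unitCube (by simp [volume_unitCube])
      isCompact_unitCube hφ.continuousOn _).ne
  have hprod : Continuous fun x => f x * g ((lam : ℝ) • x) :=
    hf.continuous.mul (hg.continuous.comp (continuous_const_smul _))
  rw [← toReal_eLpNorm_ofReal hr0 hprod.measurable,
    ← toReal_eLpNorm_ofReal hr0 hf.continuous.measurable,
    ← toReal_eLpNorm_ofReal hr0 hg.continuous.measurable]
  refine (toReal_le_add_mul_of_le (hfin f hf.continuous) (hfin g hg.continuous) ofReal_ne_top
    (eLpNorm_mul_comp_smul_le (lipschitzOnWith_sSup_norm_fderiv hf1 isCompact_unitCube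
      convex_unitCube) hg.continuous.measurable hgp hr hlam)).trans ?_
  gcongr
  rw [ENNReal.toReal_ofReal (by positivity), Real.coe_toNNReal _ hL]
  calc L * √d / lam = √d * (lam : ℝ)⁻¹ * L := by ring
    _ ≤ √d * (lam : ℝ) ^ (-(1 / r)) * (M + L) := by
        gcongr
        exacts [inv_natCast_le_rpow_neg_one_div hlam hr, le_add_of_nonneg_left hM]

/-- Improved Hölder inequality: for smooth `ℤ^d`-periodic `f, g` and `λ ∈ ℕ`, `λ > 0`,
`‖f g(λ·)‖_{L^r} ≤ ‖f‖_{L^r} ‖g‖_{L^r} + C λ^{−1/r} ‖f‖_{C¹} ‖g‖_{L^r}`, where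
`‖f‖_{C¹} = sup_{[0,1]^d} |f| + sup_{[0,1]^d} |∇f|` and `C` depends only on `r` and `d`. -/
theorem improved_holder_inequality (d : ℕ) (hd : 1 ≤ d) (r : ℝ) (hr : 1 ≤ r) :
    ∃ C : ℝ, ∀ f g : EuclideanSpace ℝ (Fin d) → ℝ,
      ContDiff ℝ (⊤ : ℕ∞) f → ContDiff ℝ (⊤ : ℕ∞) g → ZdPeriodic f → ZdPeriodic g →
      ∀ lam : ℕ, 0 < lam →
        (∫ x in unitCube d, |f x * g ((lam : ℝ) • x)| ^ r) ^ (1/r) ≤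
          (∫ x in unitCube d, |f x| ^ r) ^ (1/r) * (∫ x in unitCube d, |g x| ^ r) ^ (1/r)
          + C * (lam : ℝ) ^ (-(1/r))
            * (sSup ((fun x => |f x|) '' unitCube d)
                + sSup ((fun x => ‖fderiv ℝ f x‖) '' unitCube d))
            * (∫ x in unitCube d, |g x| ^ r) ^ (1/r) :=
  improved_holder_inequality_general d r hr
end
end

section
/- For every d ≥ 1 there exists a linear map T from the space of smooth ℤ^d-periodic functions f : ℝ^d → ℝ with ∫_{[0,1]^d} f = 0 into the space of smooth ℤ^d-periodic vector fields ℝ^d → ℝ^d, such that: (i) div(Tf) = f for every such f; and (ii) for every r ∈ [1,∞] there is a constant C_r (depending only on r and d) with ‖Tf‖_{L^r([0,1]^d)} ≤ C_r ‖f‖_{L^r([0,1]^d)} for every such f. -/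
/-!
Let `A_k f` be the average of `f` over its first `k` coordinates, so `A_0 f = f` and `A_d f` is
the constant `∫ f = 0`. The step `h_j = A_j f - A_{j+1} f` has mean zero along every line
parallel to the `j`-th axis, so its primitive `v_j(x) = ∫_0^{x_j} h_j(x₁, …, t, …, x_d) dt` along
that axis is again periodic, and `∂_j v_j = h_j`; hence `div v = ∑_j h_j = f - A_d f = f`.
On the unit cube `|v_j|` is at most the average of `|h_j|` along the `j`-th axis. Resampling one
coordinate uniformly preserves the uniform measure on the cube, so by Jensen's inequality on each
fibre averaging along an axis is an `L^r` contraction, and `‖v‖_r ≤ 2d ‖f‖_r`.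
The construction is linear on smooth functions, and any linear extension of it serves as `T`.
-/

open MeasureTheory
open scoped ENNReal

noncomputable section

/-- The divergence `div v = Σ_j ∂_j v_j` of a vector field on `ℝ^d`. -/
noncomputable def diverg {d : ℕ} (v : EuclideanSpace ℝ (Fin d) → EuclideanSpace ℝ (Fin d))
    (x : EuclideanSpace ℝ (Fin d)) : ℝ :=
  ∑ j, fderiv ℝ v x (EuclideanSpace.single j 1) j

open Set
open scoped ContDiff

universe u

theorem contDiff_intervalIntegral_of_contDiff {X V : Type u}
    [NormedAddCommGroup X] [NormedSpace ℝ X] [ProperSpace X]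
    [NormedAddCommGroup V] [NormedSpace ℝ V] [CompleteSpace V]
    {F : X × ℝ → V} (hF : ContDiff ℝ ∞ F) (a b : ℝ) :
    ContDiff ℝ ∞ (fun x => ∫ t in a..b, F (x, t)) := by
  suffices ∀ n : ℕ, ∀ (V : Type u) [NormedAddCommGroup V] [NormedSpace ℝ V] [CompleteSpace V]
      (F : X × ℝ → V), ContDiff ℝ ∞ F → ContDiff ℝ n (fun x => ∫ t in a..b, F (x, t)) from
    contDiff_infty.2 fun n => this n V F hF
  intro n
  induction n with
  | zero =>
    intro V _ _ _ F hF
    exact contDiff_zero.2 <| intervalIntegral.continuous_parametric_intervalIntegral_of_continuous'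
      (f := fun x t => F (x, t)) hF.continuous a b
  | succ n ih =>
    intro V _ _ _ F hF
    set DF : X × ℝ → X →L[ℝ] V := fun p => (fderiv ℝ F p).comp (.inl ℝ X ℝ)
    have hDF : ContDiff ℝ ∞ DF :=
      ((ContinuousLinearMap.compL ℝ X (X × ℝ) V).flip (.inl ℝ X ℝ)).contDiff.comp
        (hF.fderiv_right (by simp))
    have hderiv (x₀ : X) : HasFDerivAt (fun x => ∫ t in a..b, F (x, t))
        (∫ t in a..b, DF (x₀, t)) x₀ := by
      obtain ⟨C, hC⟩ := ((isCompact_closedBall x₀ 1).prod isCompact_uIcc)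
        |>.exists_bound_of_continuousOn hDF.continuous.continuousOn
      refine intervalIntegral.hasFDerivAt_integral_of_dominated_of_fderiv_le
        (bound := fun _ => C) (Metric.ball_mem_nhds x₀ one_pos)
        (.of_forall fun x => (hF.continuous.comp (.prodMk_right x)).aestronglyMeasurable)
        ((hF.continuous.comp (.prodMk_right x₀)).intervalIntegrable a b)
        (hDF.continuous.comp (.prodMk_right x₀)).aestronglyMeasurable
        (.of_forall fun t ht x hx =>
          hC (x, t) ⟨Metric.ball_subset_closedBall hx, uIoc_subset_uIcc ht⟩)
        intervalIntegrable_const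
        (.of_forall fun t _ x _ => ?_)
      exact ((hF.differentiable (by simp) (x, t)).hasFDerivAt).comp x (hasFDerivAt_prodMk_left x t)
    rw [Nat.cast_succ, contDiff_succ_iff_fderiv, funext fun x => (hderiv x).fderiv]
    exact ⟨fun x => (hderiv x).differentiableAt, by simp, ih _ DF hDF⟩

theorem eLpNorm_integral_le_eLpNorm_prod {α β F : Type*} [MeasurableSpace α] [MeasurableSpace β]
    [NormedAddCommGroup F] [NormedSpace ℝ F] {μ : Measure α} {ν : Measure β}
    [IsProbabilityMeasure ν] {G : α × β → F} (hG : AEStronglyMeasurable G (μ.prod ν))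
    {p : ℝ≥0∞} (hp : 1 ≤ p) :
    eLpNorm (fun x => ∫ y, G (x, y) ∂ν) p μ ≤ eLpNorm G p (μ.prod ν) := by
  -- Jensen's inequality on each fibre, via the comparison of `L¹` and `Lᵖ` norms
  have hfibre : ∀ᵐ x ∂μ, ‖∫ y, G (x, y) ∂ν‖ₑ ≤ eLpNorm (fun y => G (x, y)) p ν := by
    filter_upwards [hG.prodMk_left] with x hx
    calc ‖∫ y, G (x, y) ∂ν‖ₑ ≤ ∫⁻ y, ‖G (x, y)‖ₑ ∂ν := enorm_integral_le_lintegral_enorm _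
      _ = eLpNorm (fun y => G (x, y)) 1 ν := eLpNorm_one_eq_lintegral_enorm.symm
      _ ≤ eLpNorm (fun y => G (x, y)) p ν := eLpNorm_le_eLpNorm_of_exponent_le hp hx
  rcases eq_or_ne p ∞ with rfl | hp_top
  · refine eLpNormEssSup_le_of_ae_enorm_bound ?_
    filter_upwards [hfibre, Measure.ae_ae_of_ae_prod (ae_le_eLpNormEssSup (μ := μ.prod ν) (f := G))]
      with x hx hGx
    exact hx.trans (eLpNormEssSup_le_of_ae_enorm_bound hGx)
  · have hp0 : p ≠ 0 := (zero_lt_one.trans_le hp).ne'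
    have hpr : 0 < p.toReal := ENNReal.toReal_pos hp0 hp_top
    rw [eLpNorm_eq_lintegral_rpow_enorm_toReal hp0 hp_top,
      eLpNorm_eq_lintegral_rpow_enorm_toReal hp0 hp_top]
    gcongr ?_ ^ _
    calc ∫⁻ x, ‖∫ y, G (x, y) ∂ν‖ₑ ^ p.toReal ∂μ
        ≤ ∫⁻ x, ∫⁻ y, ‖G (x, y)‖ₑ ^ p.toReal ∂ν ∂μ := by
          refine lintegral_mono_ae ?_
          filter_upwards [hfibre] with x hx
          calc ‖∫ y, G (x, y) ∂ν‖ₑ ^ p.toReal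
              ≤ eLpNorm (fun y => G (x, y)) p ν ^ p.toReal := by gcongr
            _ = ∫⁻ y, ‖G (x, y)‖ₑ ^ p.toReal ∂ν := by
              rw [eLpNorm_eq_lintegral_rpow_enorm_toReal hp0 hp_top, ← ENNReal.rpow_mul,
                one_div, inv_mul_cancel₀ hpr.ne', ENNReal.rpow_one]
      _ = ∫⁻ z, ‖G z‖ₑ ^ p.toReal ∂μ.prod ν := (lintegral_prod _ (hG.enorm.pow_const _)).symm

theorem measurePreserving_update_pi {ι : Type*} [Fintype ι] [DecidableEq ι] {X : ι → Type*}
    [∀ i, MeasurableSpace (X i)] (μ : ∀ i, Measure (X i)) [∀ i, SigmaFinite (μ i)]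
    (j : ι) [IsProbabilityMeasure (μ j)] :
    MeasurePreserving (fun p : (∀ i, X i) × X j => Function.update p.1 j p.2)
      ((Measure.pi μ).prod (μ j)) (Measure.pi μ) := by
  refine ⟨by fun_prop, (Measure.pi_eq fun s hs => ?_).symm⟩
  have hpre : (fun p : (∀ i, X i) × X j => Function.update p.1 j p.2) ⁻¹' univ.pi s
      = univ.pi (Function.update s j univ) ×ˢ s j := by
    ext ⟨x, t⟩
    simp only [mem_preimage, mem_univ_pi, mem_prod]
    refine ⟨fun h => ⟨fun i => ?_, by simpa using h j⟩, fun h i => ?_⟩ <;>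
      rcases eq_or_ne i j with rfl | hij
    · simp
    · simpa [hij] using h i
    · simpa using h.2
    · simpa [hij] using h.1 i
  rw [Measure.map_apply (by fun_prop) (.univ_pi hs), hpre, Measure.prod_prod, Measure.pi_pi,
    ← Finset.prod_erase_mul _ (fun i => μ i (s i)) (Finset.mem_univ j),
    ← Finset.prod_erase_mul _ (fun i => μ i (Function.update s j univ i)) (Finset.mem_univ j)]
  rw [Function.update_self, measure_univ, mul_one]
  congr 1
  refine Finset.prod_congr rfl fun i hi => ?_
  rw [Function.update_of_ne (Finset.ne_of_mem_erase hi)]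

theorem EuclideanSpace.norm_le_sum_abs {ι : Type*} [Fintype ι] (v : EuclideanSpace ℝ ι) :
    ‖v‖ ≤ ∑ i, |v i| := by
  rw [EuclideanSpace.norm_eq, Real.sqrt_le_iff]
  refine ⟨Finset.sum_nonneg fun i _ => abs_nonneg _, ?_⟩
  simpa using Finset.sum_sq_le_sq_sum_of_nonneg (s := Finset.univ) fun i _ => abs_nonneg (v i)

namespace Antidivergence

variable {d : ℕ}

local notation "E" => EuclideanSpace ℝ (Fin d)
local notation "μQ" => (volume.restrict (unitCube d) : Measure E)
local notation "ν₁" => (volume.restrict (Icc (0 : ℝ) 1) : Measure ℝ)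

instance : IsProbabilityMeasure ν₁ := ⟨by simp⟩

def updateCoord (x : E) (j : Fin d) (t : ℝ) : E := WithLp.toLp 2 (Function.update x.ofLp j t)

@[simp]
lemma updateCoord_apply (x : E) (j : Fin d) (t : ℝ) (i : Fin d) :
    updateCoord x j t i = Function.update x.ofLp j t i := rfl

lemma updateCoord_self (x : E) (j : Fin d) : updateCoord x j (x j) = x := by
  ext i
  rcases eq_or_ne i j with rfl | hij
  · simp
  · simp [hij]

lemma updateCoord_add_smul_single (x : E) (j : Fin d) (s t : ℝ) :
    updateCoord (x + s • EuclideanSpace.single j 1) j t = updateCoord x j t := by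
  ext i
  rcases eq_or_ne i j with rfl | hij
  · simp
  · simp [hij]

lemma contDiff_updateCoord (j : Fin d) :
    ContDiff ℝ ∞ (fun p : E × ℝ => updateCoord p.1 j p.2) := by
  refine contDiff_euclidean.2 fun i => ?_
  rcases eq_or_ne i j with rfl | hij
  · simpa using contDiff_snd
  · simp only [updateCoord_apply, Function.update_of_ne hij]
    exact (EuclideanSpace.proj (𝕜 := ℝ) i).contDiff.comp contDiff_fst

lemma continuous_updateCoord (x : E) (j : Fin d) : Continuous (updateCoord x j) :=
  (contDiff_updateCoord j).continuous.comp (.prodMk_right x)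

lemma intervalIntegrable_updateCoord {g : E → ℝ} (hg : Continuous g) (x : E) (j : Fin d)
    (a b : ℝ) : IntervalIntegrable (fun t => g (updateCoord x j t)) volume a b :=
  (hg.comp (continuous_updateCoord x j)).intervalIntegrable a b

def latticeVec (m : Fin d → ℤ) : E := (EuclideanSpace.equiv (Fin d) ℝ).symm fun i => (m i : ℝ)

lemma updateCoord_add_latticeVec (x : E) (m : Fin d → ℤ) (j : Fin d) (t : ℝ) :
    updateCoord (x + latticeVec m) j t
      = updateCoord x j t + latticeVec (Function.update m j 0) := by
  ext i
  rcases eq_or_ne i j with rfl | hij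
  · simp [latticeVec]
  · simp [latticeVec, hij]

lemma updateCoord_add_one (x : E) (j : Fin d) (t : ℝ) :
    updateCoord x j (t + 1) = updateCoord x j t + latticeVec (Pi.single j 1) := by
  ext i
  rcases eq_or_ne i j with rfl | hij
  · simp [latticeVec]
  · simp [latticeVec, hij]

lemma unitCube_eq_preimage : unitCube d = WithLp.ofLp ⁻¹' univ.pi fun _ => Icc (0 : ℝ) 1 := by
  ext x
  simp only [unitCube, mem_preimage, mem_univ_pi, mem_ofPred_eq]

lemma isCompact_unitCube : IsCompact (unitCube d) := by
  rw [unitCube_eq_preimage]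
  exact (PiLp.continuousLinearEquiv 2 ℝ _).toHomeomorph.isCompact_preimage.2
    (isCompact_univ_pi fun _ => isCompact_Icc)

lemma measurableSet_unitCube : MeasurableSet (unitCube d) :=
  isCompact_unitCube.isClosed.measurableSet

lemma measurePreserving_toLp_unitCube :
    MeasurePreserving (MeasurableEquiv.toLp 2 (Fin d → ℝ)) (Measure.pi fun _ => ν₁) μQ := by
  have h := (PiLp.volume_preserving_toLp (Fin d)).restrict_preimage
    measurableSet_unitCube
  have hpre : WithLp.toLp 2 ⁻¹' unitCube d = univ.pi fun _ : Fin d => Icc (0 : ℝ) 1 := by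
    rw [unitCube_eq_preimage]
    rfl
  rwa [hpre, volume_pi, Measure.restrict_pi_pi] at h

instance : IsProbabilityMeasure μQ :=
  measurePreserving_toLp_unitCube.map_eq ▸ Measure.isProbabilityMeasure_map (by fun_prop)

lemma measurePreserving_updateCoord (j : Fin d) :
    MeasurePreserving (fun p : E × ℝ => updateCoord p.1 j p.2) (Measure.prod μQ ν₁) μQ :=
  have e := measurePreserving_toLp_unitCube (d := d)
  e.comp <| (measurePreserving_update_pi (fun _ => ν₁) j).comp <|
    (e.symm _).prod (.id ν₁)

def lineAvg (j : Fin d) (g : E → ℝ) (x : E) : ℝ := ∫ t in (0 : ℝ)..1, g (updateCoord x j t)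

lemma lineAvg_eq_integral (j : Fin d) (g : E → ℝ) (x : E) :
    lineAvg j g x = ∫ t, g (updateCoord x j t) ∂ν₁ := by
  rw [lineAvg, intervalIntegral.integral_of_le zero_le_one, integral_Icc_eq_integral_Ioc]

lemma eLpNorm_lineAvg_le {g : E → ℝ} (hg : AEStronglyMeasurable g μQ) (j : Fin d)
    {r : ℝ≥0∞} (hr : 1 ≤ r) : eLpNorm (lineAvg j g) r μQ ≤ eLpNorm g r μQ := by
  have hF := measurePreserving_updateCoord (d := d) j
  rw [funext (lineAvg_eq_integral j g), ← eLpNorm_comp_measurePreserving hg hF]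
  exact eLpNorm_integral_le_eLpNorm_prod (hg.comp_measurePreserving hF) hr

lemma integrable_lineAvg {g : E → ℝ} (hg : Integrable g μQ) (j : Fin d) :
    Integrable (lineAvg j g) μQ := by
  rw [funext (lineAvg_eq_integral j g)]
  exact ((measurePreserving_updateCoord j).integrable_comp_of_integrable hg).integral_prod_left

lemma integral_lineAvg {g : E → ℝ} (hg : Integrable g μQ) (j : Fin d) :
    ∫ x, lineAvg j g x ∂μQ = ∫ x, g x ∂μQ := by
  have hF := measurePreserving_updateCoord (d := d) j
  simp_rw [lineAvg_eq_integral]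
  rw [← integral_prod (fun p : E × ℝ => g (updateCoord p.1 j p.2))
    (hF.integrable_comp_of_integrable hg)]
  have h := integral_map hF.aemeasurable (hF.map_eq.symm ▸ hg.aestronglyMeasurable)
  rw [hF.map_eq] at h
  exact h.symm

lemma contDiff_lineAvg {g : E → ℝ} (hg : ContDiff ℝ ∞ g) (j : Fin d) :
    ContDiff ℝ ∞ (lineAvg j g) :=
  contDiff_intervalIntegral_of_contDiff (hg.comp (contDiff_updateCoord j)) 0 1

lemma zdPeriodic_lineAvg {g : E → ℝ} (hg : ZdPeriodic g) (j : Fin d) :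
    ZdPeriodic (lineAvg j g) := fun x m => by
  refine intervalIntegral.integral_congr fun t _ => ?_
  rw [← latticeVec, updateCoord_add_latticeVec]
  exact hg _ _

lemma lineAvg_add {g h : E → ℝ} (hg : Continuous g) (hh : Continuous h) (j : Fin d) :
    lineAvg j (g + h) = lineAvg j g + lineAvg j h := by
  funext x
  exact intervalIntegral.integral_add (intervalIntegrable_updateCoord hg x j 0 1)
    (intervalIntegrable_updateCoord hh x j 0 1)

lemma lineAvg_sub {g h : E → ℝ} (hg : Continuous g) (hh : Continuous h) (j : Fin d) :
    lineAvg j (g - h) = lineAvg j g - lineAvg j h := by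
  funext x
  exact intervalIntegral.integral_sub (intervalIntegrable_updateCoord hg x j 0 1)
    (intervalIntegrable_updateCoord hh x j 0 1)

lemma lineAvg_smul (c : ℝ) (g : E → ℝ) (j : Fin d) : lineAvg j (c • g) = c • lineAvg j g := by
  funext x
  exact intervalIntegral.integral_smul c _

/-- `partialAvg f k` averages `f` over its first `k` coordinates (over all of them once `d ≤ k`). -/
def partialAvg (f : E → ℝ) : ℕ → E → ℝ
  | 0 => f
  | k + 1 => if h : k < d then lineAvg ⟨k, h⟩ (partialAvg f k) else partialAvg f k

lemma partialAvg_succ (f : E → ℝ) (j : Fin d) :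
    partialAvg f (j + 1) = lineAvg j (partialAvg f j) := by
  simp [partialAvg, j.isLt]

lemma partialAvg_induction {f : E → ℝ} {P : (E → ℝ) → Prop} (hf : P f)
    (hstep : ∀ j g, P g → P (lineAvg j g)) (k : ℕ) : P (partialAvg f k) := by
  induction k with
  | zero => exact hf
  | succ k ih =>
    unfold partialAvg
    split_ifs
    exacts [hstep _ _ ih, ih]

lemma partialAvg_congr (f : E → ℝ) {k : ℕ} (hk : k ≤ d) {x y : E}
    (hxy : ∀ i : Fin d, k ≤ i → x i = y i) : partialAvg f k x = partialAvg f k y := by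
  induction k generalizing x y with
  | zero => rw [show x = y from PiLp.ext fun i => hxy i (Nat.zero_le _)]
  | succ k ih =>
    rw [partialAvg_succ f ⟨k, hk⟩]
    refine intervalIntegral.integral_congr fun t _ => ih (Nat.le_of_succ_le hk) fun i hi => ?_
    rcases eq_or_ne i ⟨k, hk⟩ with rfl | hik
    · simp
    · simp only [updateCoord_apply, Function.update_of_ne hik]
      exact hxy i (hi.lt_of_ne fun h => hik (Fin.ext h.symm))

lemma contDiff_partialAvg {f : E → ℝ} (hf : ContDiff ℝ ∞ f) (k : ℕ) :
    ContDiff ℝ ∞ (partialAvg f k) :=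
  partialAvg_induction hf (fun j _ hg => contDiff_lineAvg hg j) k

lemma zdPeriodic_partialAvg {f : E → ℝ} (hf : ZdPeriodic f) (k : ℕ) :
    ZdPeriodic (partialAvg f k) :=
  partialAvg_induction hf (fun j _ hg => zdPeriodic_lineAvg hg j) k

lemma eLpNorm_partialAvg_le {f : E → ℝ} (hf : ContDiff ℝ ∞ f) (k : ℕ) {r : ℝ≥0∞} (hr : 1 ≤ r) :
    eLpNorm (partialAvg f k) r μQ ≤ eLpNorm f r μQ :=
  (partialAvg_induction (P := fun g => ContDiff ℝ ∞ g ∧ eLpNorm g r μQ ≤ eLpNorm f r μQ)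
    ⟨hf, le_rfl⟩ (fun j _ ⟨hg, hgf⟩ => ⟨contDiff_lineAvg hg j,
      (eLpNorm_lineAvg_le hg.continuous.aestronglyMeasurable j hr).trans hgf⟩) k).2

lemma partialAvg_dim_eq_zero {f : E → ℝ} (hf : Integrable f μQ) (hmean : ∫ x, f x ∂μQ = 0) :
    partialAvg f d = 0 := by
  have hconst (x : E) : partialAvg f d x = partialAvg f d 0 :=
    partialAvg_congr f le_rfl fun i hi => absurd i.isLt hi.not_gt
  have hint : ∫ x, partialAvg f d x ∂μQ = ∫ x, f x ∂μQ :=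
    (partialAvg_induction (P := fun g => Integrable g μQ ∧ ∫ x, g x ∂μQ = ∫ x, f x ∂μQ)
      ⟨hf, rfl⟩ (fun j _ ⟨hg, hgf⟩ => ⟨integrable_lineAvg hg j, (integral_lineAvg hg j).trans hgf⟩)
      d).2
  simp only [hconst, integral_const, probReal_univ, one_smul, hmean] at hint
  exact funext fun x => (hconst x).trans hint

lemma lineAvg_partialAvg_succ (f : E → ℝ) (j : Fin d) :
    lineAvg j (partialAvg f (j + 1)) = partialAvg f (j + 1) := by
  funext x
  have hconst (t : ℝ) : partialAvg f (j + 1) (updateCoord x j t) = partialAvg f (j + 1) x :=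
    partialAvg_congr f j.isLt fun i hi => by
      simp [Function.update_of_ne (fun h : i = j => by omega)]
  simp [lineAvg, hconst]

lemma partialAvg_add {f g : E → ℝ} (hf : ContDiff ℝ ∞ f) (hg : ContDiff ℝ ∞ g) (k : ℕ) :
    partialAvg (f + g) k = partialAvg f k + partialAvg g k := by
  induction k with
  | zero => rfl
  | succ k ih =>
    unfold partialAvg
    split_ifs
    · rw [ih, lineAvg_add (contDiff_partialAvg hf k).continuous
        (contDiff_partialAvg hg k).continuous]
    · exact ih

lemma partialAvg_smul (c : ℝ) (f : E → ℝ) (k : ℕ) :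
    partialAvg (c • f) k = c • partialAvg f k := by
  induction k with
  | zero => rfl
  | succ k ih =>
    unfold partialAvg
    split_ifs
    · rw [ih, lineAvg_smul]
    · exact ih

def avgStep (f : E → ℝ) (j : Fin d) : E → ℝ := partialAvg f j - partialAvg f (j + 1)

lemma contDiff_avgStep {f : E → ℝ} (hf : ContDiff ℝ ∞ f) (j : Fin d) :
    ContDiff ℝ ∞ (avgStep f j) :=
  (contDiff_partialAvg hf j).sub (contDiff_partialAvg hf (j + 1))

lemma zdPeriodic_avgStep {f : E → ℝ} (hper : ZdPeriodic f) (j : Fin d) :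
    ZdPeriodic (avgStep f j) := fun x m => by
  simp only [avgStep, Pi.sub_apply, zdPeriodic_partialAvg hper _ x m]

lemma lineAvg_avgStep {f : E → ℝ} (hf : ContDiff ℝ ∞ f) (j : Fin d) :
    lineAvg j (avgStep f j) = 0 := by
  rw [avgStep, lineAvg_sub (contDiff_partialAvg hf j).continuous
    (contDiff_partialAvg hf (j + 1)).continuous, lineAvg_partialAvg_succ, ← partialAvg_succ,
    sub_self]

lemma sum_avgStep (f : E → ℝ) (x : E) :
    ∑ j, avgStep f j x = f x - partialAvg f d x := by
  simp only [avgStep, Pi.sub_apply]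
  rw [Fin.sum_univ_eq_sum_range (fun k => partialAvg f k x - partialAvg f (k + 1) x),
    Finset.sum_range_sub']
  rfl

lemma avgStep_add {f g : E → ℝ} (hf : ContDiff ℝ ∞ f) (hg : ContDiff ℝ ∞ g) (j : Fin d) :
    avgStep (f + g) j = avgStep f j + avgStep g j := by
  simp only [avgStep, partialAvg_add hf hg]
  abel

lemma avgStep_smul (c : ℝ) (f : E → ℝ) (j : Fin d) : avgStep (c • f) j = c • avgStep f j := by
  simp only [avgStep, partialAvg_smul, smul_sub]

def linePrim (j : Fin d) (g : E → ℝ) (x : E) : ℝ := ∫ t in (0 : ℝ)..x j, g (updateCoord x j t)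

lemma linePrim_eq_integral_rescaled (j : Fin d) (g : E → ℝ) (x : E) :
    linePrim j g x = ∫ u in (0 : ℝ)..1, x j • g (updateCoord x j (x j * u)) := by
  rw [intervalIntegral.integral_smul,
    intervalIntegral.smul_integral_comp_mul_left (fun t => g (updateCoord x j t)), mul_zero,
    mul_one, linePrim]

lemma contDiff_linePrim {g : E → ℝ} (hg : ContDiff ℝ ∞ g) (j : Fin d) :
    ContDiff ℝ ∞ (linePrim j g) := by
  have hj : ContDiff ℝ ∞ (fun p : E × ℝ => p.1 j) :=
    (EuclideanSpace.proj (𝕜 := ℝ) j).contDiff.comp contDiff_fst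
  rw [funext (linePrim_eq_integral_rescaled j g)]
  exact contDiff_intervalIntegral_of_contDiff (hj.smul (hg.comp ((contDiff_updateCoord j).comp
    (contDiff_fst.prodMk (hj.mul contDiff_snd))))) 0 1

lemma fderiv_linePrim_single {g : E → ℝ} (hg : Continuous g) (j : Fin d) {x : E}
    (hdiff : DifferentiableAt ℝ (linePrim j g) x) :
    fderiv ℝ (linePrim j g) x (EuclideanSpace.single j 1) = g x := by
  set v : E := EuclideanSpace.single j 1
  have hline : HasDerivAt (fun s : ℝ => x + s • v) v 0 := by
    simpa using ((hasDerivAt_id (0 : ℝ)).smul_const v).const_add x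
  have h₁ : HasDerivAt (fun s : ℝ => linePrim j g (x + s • v)) (fderiv ℝ (linePrim j g) x v) 0 :=
    hdiff.hasFDerivAt.comp_hasDerivAt_of_eq 0 hline (by simp)
  have h₂ : HasDerivAt (fun s : ℝ => linePrim j g (x + s • v)) (g x) 0 := by
    have hφ : Continuous fun t => g (updateCoord x j t) := hg.comp (continuous_updateCoord x j)
    have hFTC := intervalIntegral.integral_hasDerivAt_right (hφ.intervalIntegrable 0 (x j))
      (hφ.stronglyMeasurableAtFilter volume _) hφ.continuousAt
    rw [updateCoord_self, ← add_zero (x j)] at hFTC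
    have hline_prim : (fun s : ℝ => linePrim j g (x + s • v))
        = fun s => ∫ t in (0 : ℝ)..x j + s, g (updateCoord x j t) := by
      funext s
      simp [linePrim, v, updateCoord_add_smul_single]
    rw [hline_prim]
    exact hFTC.comp_const_add (x j) 0
  exact h₁.unique h₂

lemma zdPeriodic_linePrim {g : E → ℝ} (hg : ZdPeriodic g) (hc : Continuous g) (j : Fin d)
    (hmean : lineAvg j g = 0) : ZdPeriodic (linePrim j g) := fun x m => by
  set φ : ℝ → ℝ := fun t => g (updateCoord x j t)
  have hφ : ∀ a b, IntervalIntegrable φ volume a b := intervalIntegrable_updateCoord hc x j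
  have hper : Function.Periodic φ 1 := fun t => by
    simp only [φ, updateCoord_add_one]
    exact hg _ _
  have hshift : linePrim j g (x + latticeVec m) = ∫ t in (0 : ℝ)..x j + m j • (1 : ℝ), φ t := by
    have hcoord : (x + latticeVec m) j = x j + m j • (1 : ℝ) := by simp [latticeVec]
    rw [linePrim, hcoord]
    refine intervalIntegral.integral_congr fun t _ => ?_
    simp only [φ, updateCoord_add_latticeVec]
    exact hg _ _
  have hφ_mean : ∫ t in (0 : ℝ)..1, φ t = 0 := congr_fun hmean x
  show linePrim j g (x + latticeVec m) = linePrim j g x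
  rw [hshift, ← intervalIntegral.integral_add_adjacent_intervals (hφ 0 (x j)) (hφ (x j) _),
    hper.intervalIntegral_add_zsmul_eq (m j) (x j) hφ, hper.intervalIntegral_add_eq (x j) 0,
    zero_add, hφ_mean, smul_zero, add_zero]
  rfl

lemma abs_linePrim_le {g : E → ℝ} (hg : Continuous g) (j : Fin d) {x : E} (hx : x ∈ unitCube d) :
    |linePrim j g x| ≤ lineAvg j (fun y => |g y|) x :=
  (intervalIntegral.abs_integral_le_integral_abs (hx j).1).trans <|
    intervalIntegral.integral_mono_interval le_rfl (hx j).1 (hx j).2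
      (.of_forall fun _ => abs_nonneg _)
      (intervalIntegrable_updateCoord hg x j 0 1).abs

lemma linePrim_add {g h : E → ℝ} (hg : Continuous g) (hh : Continuous h) (j : Fin d) :
    linePrim j (g + h) = linePrim j g + linePrim j h := by
  funext x
  exact intervalIntegral.integral_add (intervalIntegrable_updateCoord hg x j _ _)
    (intervalIntegrable_updateCoord hh x j _ _)

lemma linePrim_smul (c : ℝ) (g : E → ℝ) (j : Fin d) : linePrim j (c • g) = c • linePrim j g := by
  funext x
  exact intervalIntegral.integral_smul c _

def antidiv (f : E → ℝ) (x : E) : E := WithLp.toLp 2 fun j => linePrim j (avgStep f j) x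

lemma contDiff_antidiv {f : E → ℝ} (hf : ContDiff ℝ ∞ f) : ContDiff ℝ ∞ (antidiv f) :=
  contDiff_euclidean.2 fun j => contDiff_linePrim (contDiff_avgStep hf j) j

lemma zdPeriodic_antidiv {f : E → ℝ} (hf : ContDiff ℝ ∞ f) (hper : ZdPeriodic f) :
    ZdPeriodic (antidiv f) := fun x m => by
  ext j
  exact zdPeriodic_linePrim (zdPeriodic_avgStep hper j) (contDiff_avgStep hf j).continuous j
    (lineAvg_avgStep hf j) x m

lemma diverg_antidiv {f : E → ℝ} (hf : ContDiff ℝ ∞ f) (hmean : partialAvg f d = 0) (x : E) :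
    diverg (antidiv f) x = f x := by
  have hpartial (j : Fin d) :
      fderiv ℝ (antidiv f) x (EuclideanSpace.single j 1) j = avgStep f j x := by
    have h : HasFDerivAt (linePrim j (avgStep f j))
        ((PiLp.proj 2 _ j).comp (fderiv ℝ (antidiv f) x)) x :=
      (PiLp.hasFDerivAt_apply (𝕜 := ℝ) 2 (antidiv f x) j).comp x
        ((contDiff_antidiv hf).differentiable (by simp) x).hasFDerivAt
    rw [← fderiv_linePrim_single (contDiff_avgStep hf j).continuous j h.differentiableAt, h.fderiv]
    rfl
  simp only [diverg, hpartial, sum_avgStep, hmean, Pi.zero_apply, sub_zero]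

lemma eLpNorm_antidiv_le {f : E → ℝ} (hf : ContDiff ℝ ∞ f) {r : ℝ≥0∞} (hr : 1 ≤ r) :
    eLpNorm (antidiv f) r μQ ≤ (2 * d) * eLpNorm f r μQ := by
  set W : Fin d → E → ℝ := fun j => lineAvg j fun y => |avgStep f j y|
  have hstep (j : Fin d) : Continuous (avgStep f j) := (contDiff_avgStep hf j).continuous
  have hint (j : Fin d) : Integrable (fun y => |avgStep f j y|) μQ :=
    (hstep j).abs.continuousOn.integrableOn_compact isCompact_unitCube
  have hW (j : Fin d) : eLpNorm (W j) r μQ ≤ 2 * eLpNorm f r μQ :=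
    calc eLpNorm (W j) r μQ ≤ eLpNorm (fun y => |avgStep f j y|) r μQ :=
          eLpNorm_lineAvg_le (hint j).aestronglyMeasurable j hr
      _ = eLpNorm (avgStep f j) r μQ := by
          simpa only [Real.norm_eq_abs] using eLpNorm_norm (avgStep f j)
      _ ≤ eLpNorm (partialAvg f j) r μQ + eLpNorm (partialAvg f (j + 1)) r μQ :=
          eLpNorm_sub_le (contDiff_partialAvg hf j).continuous.aestronglyMeasurable
            (contDiff_partialAvg hf (j + 1)).continuous.aestronglyMeasurable hr
      _ ≤ eLpNorm f r μQ + eLpNorm f r μQ :=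
          add_le_add (eLpNorm_partialAvg_le hf j hr) (eLpNorm_partialAvg_le hf (j + 1) hr)
      _ = 2 * eLpNorm f r μQ := (two_mul _).symm
  calc eLpNorm (antidiv f) r μQ ≤ eLpNorm (∑ j, W j) r μQ := by
        refine eLpNorm_mono_ae_real <|
          ae_restrict_of_forall_mem measurableSet_unitCube fun x hx => ?_
        calc ‖antidiv f x‖ ≤ ∑ j, |antidiv f x j| := EuclideanSpace.norm_le_sum_abs _
          _ ≤ ∑ j, W j x := Finset.sum_le_sum fun j _ => abs_linePrim_le (hstep j) j hx
          _ = (∑ j, W j) x := (Finset.sum_apply _ _ _).symm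
    _ ≤ ∑ j, eLpNorm (W j) r μQ :=
        eLpNorm_sum_le (fun j _ => (integrable_lineAvg (hint j) j).aestronglyMeasurable) hr
    _ ≤ ∑ _j : Fin d, 2 * eLpNorm f r μQ := Finset.sum_le_sum fun j _ => hW j
    _ = (2 * d) * eLpNorm f r μQ := by
        rw [Finset.sum_const, Finset.card_univ, Fintype.card_fin, nsmul_eq_mul]
        ring

lemma antidiv_add {f g : E → ℝ} (hf : ContDiff ℝ ∞ f) (hg : ContDiff ℝ ∞ g) :
    antidiv (f + g) = antidiv f + antidiv g := by
  funext x
  ext j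
  simp [antidiv, avgStep_add hf hg,
    linePrim_add (contDiff_avgStep hf j).continuous (contDiff_avgStep hg j).continuous]

lemma antidiv_smul (c : ℝ) (f : E → ℝ) : antidiv (c • f) = c • antidiv f := by
  funext x
  ext j
  simp [antidiv, avgStep_smul, linePrim_smul]

variable (d) in
def smoothSubmodule : Submodule ℝ (E → ℝ) where
  carrier := {f | ContDiff ℝ ∞ f}
  add_mem' {f g} (hf : ContDiff ℝ ∞ f) (hg : ContDiff ℝ ∞ g) := hf.add hg
  zero_mem' := (contDiff_const (c := (0 : ℝ)) : ContDiff ℝ ∞ fun _ : E => (0 : ℝ))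
  smul_mem' c f (hf : ContDiff ℝ ∞ f) := hf.const_smul c

variable (d) in
def antidivₗ : smoothSubmodule d →ₗ[ℝ] E → E where
  toFun f := antidiv f
  map_add' f g := antidiv_add f.2 g.2
  map_smul' c f := antidiv_smul c (f : E → ℝ)

end Antidivergence

open Antidivergence in
theorem antidivergence_exists_general (d : ℕ) :
    ∃ T : (EuclideanSpace ℝ (Fin d) → ℝ)
        →ₗ[ℝ] (EuclideanSpace ℝ (Fin d) → EuclideanSpace ℝ (Fin d)),
      (∀ f : EuclideanSpace ℝ (Fin d) → ℝ,
        ContDiff ℝ (⊤ : ℕ∞) f → ZdPeriodic f → (∫ x in unitCube d, f x) = 0 →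
          ContDiff ℝ (⊤ : ℕ∞) (T f) ∧ ZdPeriodic (T f) ∧ ∀ x, diverg (T f) x = f x) ∧
      (∀ r : ℝ≥0∞, 1 ≤ r → ∃ C : ℝ≥0∞, C ≠ ⊤ ∧
        ∀ f : EuclideanSpace ℝ (Fin d) → ℝ,
          ContDiff ℝ (⊤ : ℕ∞) f → ZdPeriodic f → (∫ x in unitCube d, f x) = 0 →
            eLpNorm (T f) r (volume.restrict (unitCube d))
              ≤ C * eLpNorm f r (volume.restrict (unitCube d))) := by
  obtain ⟨T, hT⟩ := LinearMap.exists_extend (antidivₗ d)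
  have hT_apply {f} (hf : ContDiff ℝ ∞ f) : T f = antidiv f :=
    LinearMap.congr_fun hT (⟨f, hf⟩ : smoothSubmodule d)
  refine ⟨T, fun f hf hper hmean => ?_, fun r hr => ⟨2 * d, by finiteness, fun f hf _ _ => ?_⟩⟩
  · have hf_int : IntegrableOn f (unitCube d) :=
      hf.continuous.continuousOn.integrableOn_compact isCompact_unitCube
    rw [hT_apply hf]
    exact ⟨contDiff_antidiv hf, zdPeriodic_antidiv hf hper,
      diverg_antidiv hf (partialAvg_dim_eq_zero hf_int hmean)⟩
  · rw [hT_apply hf]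
    exact eLpNorm_antidiv_le hf hr

/-- Existence of the standard antidivergence operator: a linear map `T` sending each smooth
`ℤ^d`-periodic mean-zero function `f` to a smooth `ℤ^d`-periodic vector field with
`div (T f) = f` and, for every `r ∈ [1,∞]`, `‖T f‖_{L^r([0,1]^d)} ≤ C_r ‖f‖_{L^r([0,1]^d)}`
with `C_r` depending only on `r` and `d`. -/
theorem antidivergence_exists (d : ℕ) (hd : 1 ≤ d) :
    ∃ T : (EuclideanSpace ℝ (Fin d) → ℝ)
        →ₗ[ℝ] (EuclideanSpace ℝ (Fin d) → EuclideanSpace ℝ (Fin d)),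
      (∀ f : EuclideanSpace ℝ (Fin d) → ℝ,
        ContDiff ℝ (⊤ : ℕ∞) f → ZdPeriodic f → (∫ x in unitCube d, f x) = 0 →
          ContDiff ℝ (⊤ : ℕ∞) (T f) ∧ ZdPeriodic (T f) ∧ ∀ x, diverg (T f) x = f x) ∧
      (∀ r : ℝ≥0∞, 1 ≤ r → ∃ C : ℝ≥0∞, C ≠ ⊤ ∧
        ∀ f : EuclideanSpace ℝ (Fin d) → ℝ,
          ContDiff ℝ (⊤ : ℕ∞) f → ZdPeriodic f → (∫ x in unitCube d, f x) = 0 →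
            eLpNorm (T f) r (volume.restrict (unitCube d))
              ≤ C * eLpNorm f r (volume.restrict (unitCube d))) :=
  antidivergence_exists_general d
end
end

section
/- Let d ≥ 1, fix j ∈ {1,…,d}, let φ, φ̃, ψ : ℝ^d → ℝ be smooth with ∂_j ψ ≡ 0 (ψ does not depend on the j-th coordinate), and let λ, ν ∈ ℝ and σ ∈ ℝ, σ ≠ 0. Define for (t,x) ∈ ℝ × ℝ^d: Θ(t,x) := φ(λ(x − σt e_j)) ψ(νx), W(t,x) := φ̃(λ(x − σt e_j)) ψ(νx) e_j, and Q(t,x) := σ^{−1} φ(λ(x − σt e_j)) φ̃(λ(x − σt e_j)) ψ(νx)². Then for all (t,x): ∂_t Q(t,x) + div_x(Θ W)(t,x) = 0, where div_x(ΘW) = Σ_{k=1}^d ∂_{x_k}(Θ W_k). -/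
/-!
With `G z = φ(λz) φ̃(λz)` and `P y = ψ(νy)²`, the corrector is `σ⁻¹ G(x − σt e_j) P(x)` and the
flux is `G(x − σt e_j) P(x) e_j`. The first factor is transported along `e_j` with speed `σ`, so
`∂_t = −σ ∂_j` on it, while `P` is constant along `e_j`; hence `∂_t Q = −∂_j(G P) = −div(ΘW)`.
-/

open Finset

section

variable {E V : Type*} [NormedAddCommGroup E] [NormedSpace ℝ E]
  [NormedAddCommGroup V] [NormedSpace ℝ V]

theorem hasDerivAt_comp_sub_mul_smul {F : E → V} {F' : E →L[ℝ] V} {x v : E} {σ t : ℝ}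
    (hF : HasFDerivAt F F' (x - (σ * t) • v)) :
    HasDerivAt (fun s : ℝ => F (x - (σ * s) • v)) (-σ • F' v) t := by
  have hpath : HasDerivAt (fun s : ℝ => x - (σ * s) • v) (-(σ • v)) t := by
    simpa using (((hasDerivAt_id t).const_mul σ).smul_const v).const_sub x
  simpa [Function.comp_def] using hF.comp_hasDerivAt t hpath

theorem fderiv_mul_apply_of_fderiv_apply_eq_zero {f g : E → ℝ} {x v : E}
    (hf : DifferentiableAt ℝ f x) (hg : DifferentiableAt ℝ g x) (hgv : fderiv ℝ g x v = 0) :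
    fderiv ℝ (fun y => f y * g y) x v = fderiv ℝ f x v * g x := by
  rw [fderiv_fun_mul hf hg]
  simp [hgv, mul_comm]

theorem fderiv_comp_smul_sq_apply_eq_zero {ψ : E → ℝ} {x v : E} (ν : ℝ)
    (hψ : DifferentiableAt ℝ ψ (ν • x)) (hψv : fderiv ℝ ψ (ν • x) v = 0) :
    fderiv ℝ (fun y => ψ (ν • y) ^ 2) x v = 0 := by
  have h : HasFDerivAt (fun y => ψ (ν • y) ^ 2) _ x :=
    (hψ.hasFDerivAt.comp x ((hasFDerivAt_id x).const_smul ν)).pow 2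
  rw [h.fderiv]
  simp [hψv]

end

theorem sum_fderiv_mul_single_apply {d : ℕ} (f : EuclideanSpace ℝ (Fin d) → ℝ) (j : Fin d)
    (x : EuclideanSpace ℝ (Fin d)) :
    ∑ i, fderiv ℝ (fun y => f y * EuclideanSpace.single j (1 : ℝ) i) x
        (EuclideanSpace.single i 1) = fderiv ℝ f x (EuclideanSpace.single j 1) := by
  rw [sum_eq_single j]
  · simp
  · intro i _ hi
    simp [hi]
  · simp

theorem mikado_continuity_equation_general (d : ℕ) (j : Fin d)
    (φ φt ψ : EuclideanSpace ℝ (Fin d) → ℝ)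
    (hφ : ContDiff ℝ (⊤ : ℕ∞) φ) (hφt : ContDiff ℝ (⊤ : ℕ∞) φt)
    (hψ : ContDiff ℝ (⊤ : ℕ∞) ψ)
    (hψj : ∀ x, fderiv ℝ ψ x (EuclideanSpace.single j 1) = 0)
    (lam ν σ : ℝ) (hσ : σ ≠ 0) :
    ∀ (t : ℝ) (x : EuclideanSpace ℝ (Fin d)),
      deriv (fun s : ℝ =>
          σ⁻¹ * (φ (lam • (x - (σ * s) • EuclideanSpace.single j (1:ℝ)))
            * φt (lam • (x - (σ * s) • EuclideanSpace.single j (1:ℝ)))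
            * (ψ (ν • x)) ^ 2)) t
      + ∑ i : Fin d,
          fderiv ℝ (fun y : EuclideanSpace ℝ (Fin d) =>
              (φ (lam • (y - (σ * t) • EuclideanSpace.single j (1:ℝ))) * ψ (ν • y))
              * (φt (lam • (y - (σ * t) • EuclideanSpace.single j (1:ℝ))) * ψ (ν • y)
                  * EuclideanSpace.single j (1:ℝ) i))
            x (EuclideanSpace.single i 1)
      = 0 := by
  intro t x
  set e := EuclideanSpace.single j (1 : ℝ)
  set G := fun z => φ (lam • z) * φt (lam • z)
  set P := fun y : EuclideanSpace ℝ (Fin d) => ψ (ν • y) ^ 2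
  have hG : Differentiable ℝ G :=
    ((hφ.mul hφt).comp (contDiff_const_smul lam)).differentiable (by simp)
  have hP : Differentiable ℝ P :=
    ((hψ.comp (contDiff_const_smul ν)).pow 2).differentiable (by simp)
  have hPe : fderiv ℝ P x e = 0 :=
    fderiv_comp_smul_sq_apply_eq_zero ν ((hψ.differentiable (by simp)) _) (hψj _)
  have htime : HasDerivAt
      (fun s : ℝ => σ⁻¹ * (φ (lam • (x - (σ * s) • e)) * φt (lam • (x - (σ * s) • e))
        * ψ (ν • x) ^ 2))
      (σ⁻¹ * (-σ * fderiv ℝ G (x - (σ * t) • e) e * P x)) t :=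
    ((hasDerivAt_comp_sub_mul_smul (hG _).hasFDerivAt).mul_const (P x)).const_mul σ⁻¹
  have hflux : ∀ i, (fun y => φ (lam • (y - (σ * t) • e)) * ψ (ν • y)
      * (φt (lam • (y - (σ * t) • e)) * ψ (ν • y) * e i))
      = fun y => G (y - (σ * t) • e) * P y * e i := fun i => funext fun y => by ring
  have hspace : ∑ i, fderiv ℝ (fun y => G (y - (σ * t) • e) * P y * e i) x
      (EuclideanSpace.single i 1) = fderiv ℝ G (x - (σ * t) • e) e * P x := by
    rw [sum_fderiv_mul_single_apply (fun y => G (y - (σ * t) • e) * P y),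
      fderiv_mul_apply_of_fderiv_apply_eq_zero ((differentiableAt_comp_sub _).2 (hG _)) (hP x) hPe,
      fderiv_comp_sub]
  simp only [htime.deriv, hflux, hspace]
  field_simp
  ring

/-- The Mikado density `Θ(t,x) = φ(λ(x−σt e_j)) ψ(νx)`, the Mikado field
`W(t,x) = φ̃(λ(x−σt e_j)) ψ(νx) e_j` and the quadratic corrector
`Q(t,x) = σ⁻¹ φ(λ(x−σt e_j)) φ̃(λ(x−σt e_j)) ψ(νx)²` (with `ψ` independent of the `j`-th
coordinate) solve the continuity equation `∂_t Q + div_x(Θ W) = 0`. -/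
theorem mikado_continuity_equation (d : ℕ) (hd : 1 ≤ d) (j : Fin d)
    (φ φt ψ : EuclideanSpace ℝ (Fin d) → ℝ)
    (hφ : ContDiff ℝ (⊤ : ℕ∞) φ) (hφt : ContDiff ℝ (⊤ : ℕ∞) φt)
    (hψ : ContDiff ℝ (⊤ : ℕ∞) ψ)
    (hψj : ∀ x, fderiv ℝ ψ x (EuclideanSpace.single j 1) = 0)
    (lam ν σ : ℝ) (hσ : σ ≠ 0) :
    ∀ (t : ℝ) (x : EuclideanSpace ℝ (Fin d)),
      deriv (fun s : ℝ =>
          σ⁻¹ * (φ (lam • (x - (σ * s) • EuclideanSpace.single j (1:ℝ)))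
            * φt (lam • (x - (σ * s) • EuclideanSpace.single j (1:ℝ)))
            * (ψ (ν • x)) ^ 2)) t
      + ∑ i : Fin d,
          fderiv ℝ (fun y : EuclideanSpace ℝ (Fin d) =>
              (φ (lam • (y - (σ * t) • EuclideanSpace.single j (1:ℝ))) * ψ (ν • y))
              * (φt (lam • (y - (σ * t) • EuclideanSpace.single j (1:ℝ))) * ψ (ν • y)
                  * EuclideanSpace.single j (1:ℝ) i))
            x (EuclideanSpace.single i 1)
      = 0 :=
  mikado_continuity_equation_general d j φ φt ψ hφ hφt hψ hψj lam ν σ hσ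
end

section
/- Let n ≥ 1, θ ∈ (0,1], and let χ : ℝ^n → ℝ be smooth, nonnegative, supported in the closed unit ball, with ∫χ = 1; set χ_ε(z) := ε^{−n}χ(z/ε). Let v : ℝ^n → ℝ be bounded and continuous with Hölder seminorm [v]_θ ≤ H, and let ρ : ℝ^n → ℝ be bounded and continuously differentiable with bounded gradient. Then for every ε ∈ (0,1], the commutator satisfies sup_{z∈ℝ^n} | v(z)·(ρ * χ_ε)(z) − ((vρ) * χ_ε)(z) | ≤ ( sup|v|·(2 sup|ρ| + 2 sup|∇ρ|) + H · sup|ρ| ) · ε^θ. -/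
/-!
Since `χ_ε ≥ 0` has integral one and is supported in the ball of radius `ε`, the commutator is
`∫ (v(z) - v(z - y)) ρ(z - y) χ_ε(y) dy`, and on the support of `χ_ε` the Hölder bound gives
`|v(z) - v(z - y)| ≤ H ε^θ`. Hence the commutator is at most `H sup|ρ| ε^θ`; the remaining
terms of the bound are nonnegative.
-/

open MeasureTheory Module

theorem nonneg_of_abs_sub_le_mul_norm_rpow {E : Type*} [NormedAddCommGroup E] [Nontrivial E]
    {f : E → ℝ} {H θ : ℝ} (hf : ∀ z₁ z₂, |f z₁ - f z₂| ≤ H * ‖z₁ - z₂‖ ^ θ) : 0 ≤ H := by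
  obtain ⟨x, hx⟩ := exists_ne (0 : E)
  have hpos : 0 < ‖x - 0‖ ^ θ := Real.rpow_pos_of_pos (by simpa using hx) θ
  exact nonneg_of_mul_nonneg_left ((abs_nonneg _).trans (hf x 0)) hpos

theorem norm_le_of_mul_comp_inv_smul_ne_zero {E : Type*} [NormedAddCommGroup E]
    [NormedSpace ℝ E] {χ : E → ℝ} (hχ : Function.support χ ⊆ Metric.closedBall 0 1)
    {ε c : ℝ} (hε : 0 < ε) {y : E} (hy : c * χ (ε⁻¹ • y) ≠ 0) : ‖y‖ ≤ ε := by
  have hmem := hχ (right_ne_zero_of_mul hy)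
  rwa [mem_closedBall_zero_iff, norm_smul, norm_inv, Real.norm_of_nonneg hε.le,
    inv_mul_le_iff₀ hε, mul_one] at hmem

theorem integral_rpow_mul_comp_inv_smul {E : Type*} [NormedAddCommGroup E] [NormedSpace ℝ E]
    [FiniteDimensional ℝ E] [MeasurableSpace E] [BorelSpace E] (μ : Measure E)
    [μ.IsAddHaarMeasure] (χ : E → ℝ) {ε : ℝ} (hε : 0 < ε) {d : ℕ} (hd : finrank ℝ E = d) :
    ∫ y, ε ^ (-(d : ℝ)) * χ (ε⁻¹ • y) ∂μ = ∫ y, χ y ∂μ := by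
  rw [integral_const_mul, Measure.integral_comp_inv_smul_of_nonneg μ χ hε.le, hd, smul_eq_mul,
    ← mul_assoc, ← Real.rpow_natCast, ← Real.rpow_add hε, neg_add_cancel, Real.rpow_zero, one_mul]

theorem abs_mul_integral_sub_integral_le {E : Type*} [NormedAddCommGroup E] [MeasurableSpace E]
    [OpensMeasurableSpace E] {μ : Measure E} {v ρ g : E → ℝ} {H θ ε Mv Mρ : ℝ}
    (hv : Continuous v) (hρ : Continuous ρ) (hg : Integrable g μ) (hg0 : ∀ y, 0 ≤ g y)
    (hgsupp : ∀ y, g y ≠ 0 → ‖y‖ ≤ ε) (hH : 0 ≤ H) (hθ : 0 ≤ θ)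
    (hvH : ∀ z₁ z₂, |v z₁ - v z₂| ≤ H * ‖z₁ - z₂‖ ^ θ)
    (hMv : ∀ z, |v z| ≤ Mv) (hMρ : ∀ z, |ρ z| ≤ Mρ) (z : E) :
    |v z * ∫ y, ρ (z - y) * g y ∂μ - ∫ y, (v (z - y) * ρ (z - y)) * g y ∂μ|
      ≤ H * Mρ * ε ^ θ * ∫ y, g y ∂μ := by
  have hshift : Continuous fun y : E => z - y := continuous_const.sub continuous_id
  have hρg : Integrable (fun y => ρ (z - y) * g y) μ :=
    hg.bdd_mul (hρ.comp hshift).aestronglyMeasurable (.of_forall fun y => hMρ (z - y))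
  have hvρg : Integrable (fun y => (v (z - y) * ρ (z - y)) * g y) μ :=
    hg.bdd_mul ((hv.comp hshift).mul (hρ.comp hshift)).aestronglyMeasurable
      (c := Mv * Mρ) (.of_forall fun y => by
        rw [norm_mul]
        exact mul_le_mul (hMv _) (hMρ _) (norm_nonneg _) ((abs_nonneg _).trans (hMv z)))
  have hpointwise : ∀ y, ‖(v z - v (z - y)) * ρ (z - y) * g y‖ ≤ H * Mρ * ε ^ θ * g y := by
    intro y
    by_cases hy : g y = 0
    · simp [hy]
    have hvy : |v z - v (z - y)| ≤ H * ε ^ θ := by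
      calc |v z - v (z - y)| ≤ H * ‖y‖ ^ θ := by simpa using hvH z (z - y)
        _ ≤ H * ε ^ θ := by gcongr; exact hgsupp y hy
    rw [norm_mul, norm_mul, Real.norm_of_nonneg (hg0 y), mul_right_comm H]
    exact mul_le_mul_of_nonneg_right
      (mul_le_mul hvy (hMρ _) (abs_nonneg _) ((abs_nonneg _).trans hvy)) (hg0 y)
  calc |v z * ∫ y, ρ (z - y) * g y ∂μ - ∫ y, (v (z - y) * ρ (z - y)) * g y ∂μ|
      = ‖∫ y, (v z - v (z - y)) * ρ (z - y) * g y ∂μ‖ := by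
        rw [← integral_const_mul, ← integral_sub (hρg.const_mul _) hvρg, Real.norm_eq_abs]
        congr 2 with y
        ring
    _ ≤ ∫ y, H * Mρ * ε ^ θ * g y ∂μ :=
        norm_integral_le_of_norm_le (hg.const_mul _) (.of_forall hpointwise)
    _ = H * Mρ * ε ^ θ * ∫ y, g y ∂μ := integral_const_mul _ _

theorem commutator_estimate_general (n : ℕ) (hn : 1 ≤ n) (θ : ℝ) (hθ : θ ∈ Set.Ioc (0:ℝ) 1)
    (χ : EuclideanSpace ℝ (Fin n) → ℝ) (hχpos : ∀ z, 0 ≤ χ z)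
    (hχsupp : Function.support χ ⊆ Metric.closedBall 0 1) (hχint : ∫ z, χ z = 1)
    (v ρ : EuclideanSpace ℝ (Fin n) → ℝ) (hv : Continuous v) (hρ : ContDiff ℝ 1 ρ)
    (H Mv Mρ Mρ' : ℝ)
    (hvH : ∀ z₁ z₂, |v z₁ - v z₂| ≤ H * ‖z₁ - z₂‖ ^ θ)
    (hMv : ∀ z, |v z| ≤ Mv) (hMρ : ∀ z, |ρ z| ≤ Mρ) (hMρ' : ∀ z, ‖fderiv ℝ ρ z‖ ≤ Mρ') :
    ∀ ε : ℝ, 0 < ε → ε ≤ 1 → ∀ z : EuclideanSpace ℝ (Fin n),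
      |v z * (∫ y : EuclideanSpace ℝ (Fin n), ρ (z - y) * (ε ^ (-(n : ℝ)) * χ (ε⁻¹ • y)))
          - ∫ y : EuclideanSpace ℝ (Fin n),
              (v (z - y) * ρ (z - y)) * (ε ^ (-(n : ℝ)) * χ (ε⁻¹ • y))|
        ≤ (Mv * (2 * Mρ + 2 * Mρ') + H * Mρ) * ε ^ θ := by
  intro ε hε _ z
  have : Nonempty (Fin n) := ⟨⟨0, hn⟩⟩
  have hH : 0 ≤ H := nonneg_of_abs_sub_le_mul_norm_rpow hvH
  have hχi : Integrable χ := .of_integral_ne_zero (by simp [hχint])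
  have hcomm := abs_mul_integral_sub_integral_le hv hρ.continuous
    ((hχi.comp_smul (inv_ne_zero hε.ne')).const_mul (ε ^ (-(n : ℝ))))
    (fun y => mul_nonneg (Real.rpow_nonneg hε.le _) (hχpos _))
    (fun y => norm_le_of_mul_comp_inv_smul_ne_zero hχsupp hε) hH hθ.1.le hvH hMv hMρ z
  rw [integral_rpow_mul_comp_inv_smul volume χ hε finrank_euclideanSpace_fin, hχint,
    mul_one] at hcomm
  have hMv0 : 0 ≤ Mv := (abs_nonneg _).trans (hMv 0)
  have hMρ0 : 0 ≤ Mρ := (abs_nonneg _).trans (hMρ 0)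
  have hMρ'0 : 0 ≤ Mρ' := (norm_nonneg _).trans (hMρ' 0)
  refine hcomm.trans (mul_le_mul_of_nonneg_right ?_ (Real.rpow_nonneg hε.le θ))
  exact le_add_of_nonneg_left (by positivity)

/-- Commutator estimate: for a mollifier `χ` on `ℝ^n`, a bounded continuous `v` with Hölder
seminorm `[v]_θ ≤ H` and a bounded `C¹` function `ρ` with bounded gradient,
`sup_z |v(z)(ρ * χ_ε)(z) − ((vρ) * χ_ε)(z)| ≤ (sup|v|(2 sup|ρ| + 2 sup|∇ρ|) + H sup|ρ|) ε^θ`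
for every `ε ∈ (0,1]`. -/
theorem commutator_estimate (n : ℕ) (hn : 1 ≤ n) (θ : ℝ) (hθ : θ ∈ Set.Ioc (0:ℝ) 1)
    (χ : EuclideanSpace ℝ (Fin n) → ℝ) (hχ : ContDiff ℝ (⊤ : ℕ∞) χ) (hχpos : ∀ z, 0 ≤ χ z)
    (hχsupp : Function.support χ ⊆ Metric.closedBall 0 1) (hχint : ∫ z, χ z = 1)
    (v ρ : EuclideanSpace ℝ (Fin n) → ℝ) (hv : Continuous v) (hρ : ContDiff ℝ 1 ρ)
    (H Mv Mρ Mρ' : ℝ)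
    (hvH : ∀ z₁ z₂, |v z₁ - v z₂| ≤ H * ‖z₁ - z₂‖ ^ θ)
    (hMv : ∀ z, |v z| ≤ Mv) (hMρ : ∀ z, |ρ z| ≤ Mρ) (hMρ' : ∀ z, ‖fderiv ℝ ρ z‖ ≤ Mρ') :
    ∀ ε : ℝ, 0 < ε → ε ≤ 1 → ∀ z : EuclideanSpace ℝ (Fin n),
      |v z * (∫ y : EuclideanSpace ℝ (Fin n), ρ (z - y) * (ε ^ (-(n : ℝ)) * χ (ε⁻¹ • y)))
          - ∫ y : EuclideanSpace ℝ (Fin n),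
              (v (z - y) * ρ (z - y)) * (ε ^ (-(n : ℝ)) * χ (ε⁻¹ • y))|
        ≤ (Mv * (2 * Mρ + 2 * Mρ') + H * Mρ) * ε ^ θ :=
  commutator_estimate_general n hn θ hθ χ hχpos hχsupp hχint v ρ hv hρ H Mv Mρ Mρ' hvH hMv hMρ hMρ'
end
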